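/- Let A and B be types and let f : A^ω → 𝒫(B^ω) be prefix-continuous, prefix-closed, and prefix-compact. Then: (i) if L ⊆ B^ω is a safety property, the existential preimage f_E^{-1}(L) is a safety property; (ii) if L is a guarantee property, f_E^{-1}(L) is a guarantee property; (iii) if L is a persistence property, f_E^{-1}(L) is a persistence property. -/
import Mathlib

/-- The prefix of length `n` of the infinite word `π`, i.e. the list `[π 0, …, π (n-1)]`. -/
def wordPrefix {A : Type*} (π : ℕ → A) (n : ℕ) : List A := (List.range n).map π

/-- The set of prefixes of length `n` of words in `L`. -/
def prefN {A : Type*} (L : Set (ℕ → A)) (n : ℕ) : Set (List A) :=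
  (fun π => wordPrefix π n) '' L

/-- The set of all prefixes of words in `L`. -/
def prefAll {A : Type*} (L : Set (ℕ → A)) : Set (List A) := ⋃ n, prefN L n

/-- The set of all prefixes of the single word `π`. -/
def prefWord {A : Type*} (π : ℕ → A) : Set (List A) := {w | ∃ n, w = wordPrefix π n}

/-- `f` is prefix-continuous. -/
def PrefixContinuous {A B : Type*} (f : (ℕ → A) → Set (ℕ → B)) : Prop :=
  ∀ (n : ℕ) (π : ℕ → A), ∃ m : ℕ, ∀ π' : ℕ → A,
    wordPrefix π' m = wordPrefix π m → prefN (f π) n = prefN (f π') n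

/-- `f` is prefix-closed. -/
def PrefixClosed {A B : Type*} (f : (ℕ → A) → Set (ℕ → B)) : Prop :=
  ∀ (π : ℕ → A) (σ : ℕ → B), prefWord σ ⊆ prefAll (f π) → σ ∈ f π

/-- `f` is prefix-compact. -/
def PrefixCompact {A B : Type*} (f : (ℕ → A) → Set (ℕ → B)) : Prop :=
  ∀ (n : ℕ) (π : ℕ → A), (prefN (f π) n).Finite

/-- The universal preimage of `S` under `f`. -/
def univPreimage {A B : Type*} (f : (ℕ → A) → Set (ℕ → B)) (S : Set (ℕ → B)) :
    Set (ℕ → A) := {π | f π ⊆ S}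

/-- The existential preimage of `S` under `f`. -/
def existPreimage {A B : Type*} (f : (ℕ → A) → Set (ℕ → B)) (S : Set (ℕ → B)) :
    Set (ℕ → A) := {π | (f π ∩ S).Nonempty}

/-- `L` is a safety property. -/
def IsSafetyProperty {B : Type*} (L : Set (ℕ → B)) : Prop :=
  ∃ Φ : Set (List B), L = {π | ∀ n : ℕ, wordPrefix π n ∈ Φ}

/-- `L` is a guarantee property. -/
def IsGuaranteeProperty {B : Type*} (L : Set (ℕ → B)) : Prop :=
  ∃ Φ : Set (List B), L = {π | ∃ n : ℕ, wordPrefix π n ∈ Φ}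

/-- `L` is a recurrence property. -/
def IsRecurrenceProperty {B : Type*} (L : Set (ℕ → B)) : Prop :=
  ∃ Φ : Set (List B), L = {π | {n : ℕ | wordPrefix π n ∈ Φ}.Infinite}

/-- `L` is a persistence property. -/
def IsPersistenceProperty {B : Type*} (L : Set (ℕ → B)) : Prop :=
  ∃ Φ : Set (List B), L = {π | {n : ℕ | wordPrefix π n ∈ Φ}.Finite}

/- ### Auxiliary lemmas -/

lemma wordPrefix_length {A : Type*} (π : ℕ → A) (n : ℕ) : (wordPrefix π n).length = n := by
  simp [wordPrefix]

lemma wordPrefix_take {A : Type*} (π : ℕ → A) (k n : ℕ) :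
    (wordPrefix π n).take k = wordPrefix π (min k n) := by
  simp [wordPrefix, ← List.map_take, List.take_range]

lemma wordPrefix_succ {A : Type*} (π : ℕ → A) (n : ℕ) :
    wordPrefix π (n + 1) = wordPrefix π n ++ [π n] := by
  simp [wordPrefix, List.range_succ]

lemma wordPrefix_agree_of_le {A : Type*} {π π' : ℕ → A} {m M : ℕ}
    (h : wordPrefix π' M = wordPrefix π M) (hm : m ≤ M) :
    wordPrefix π' m = wordPrefix π m := by
  have := congrArg (List.take m) h
  rwa [wordPrefix_take, wordPrefix_take, min_eq_left hm] at this

lemma mem_existPreimage {A B : Type*} {f : (ℕ → A) → Set (ℕ → B)} {S : Set (ℕ → B)}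
    {π : ℕ → A} : π ∈ existPreimage f S ↔ ∃ σ, σ ∈ f π ∧ σ ∈ S := Iff.rfl

/-- Kőnig's lemma for trees of finite words. -/
lemma exists_branch {B : Type*} {T : Set (List B)}
    (hfin : ∀ n, {w | w ∈ T ∧ w.length = n}.Finite)
    (hpref : ∀ w ∈ T, ∀ k, w.take k ∈ T)
    (hinf : ∀ n, ∃ w ∈ T, w.length = n) :
    ∃ σ : ℕ → B, ∀ n, wordPrefix σ n ∈ T := by
  classical
  obtain ⟨w1, _, hl1⟩ := hinf 1
  have hw1 : w1 ≠ [] := by intro h; simp [h] at hl1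
  set b0 : B := w1.head hw1 with hb0
  let α : ℕ → Type _ := fun n => {w : List B // w ∈ T ∧ w.length = n}
  haveI hNE : ∀ n, Nonempty (α n) := fun n => by
    obtain ⟨w, hw, hl⟩ := hinf n; exact ⟨⟨w, hw, hl⟩⟩
  haveI hF : ∀ n, Finite (α n) := fun n => (hfin n).to_subtype
  let proj : {i j : ℕ} → i ≤ j → α j → α i := fun {i j} hij w =>
    ⟨w.1.take i, hpref _ w.2.1 i, by rw [List.length_take, w.2.2]; exact min_eq_left hij⟩
  obtain ⟨g, hg⟩ := exists_seq_forall_proj_of_forall_finite (α := α) proj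
    (fun i a => Subtype.ext (by simp [proj, ← a.2.2, List.take_length]))
    (fun i j k hij hjk a => Subtype.ext (by simp [proj, List.take_take, min_eq_left hij]))
    (fun i a => Set.toFinite _)
  set σ : ℕ → B := fun n => (g (n + 1)).1.getD n b0 with hσ
  have key : ∀ n, wordPrefix σ n = (g n).1 := by
    intro n
    induction n with
    | zero =>
      have h0 : (g 0).1.length = 0 := (g 0).2.2
      rw [List.length_eq_zero_iff] at h0
      simp [wordPrefix, h0]
    | succ n ih =>
      have hp : (g (n + 1)).1.take n = (g n).1 := congrArg Subtype.val (hg (Nat.le_succ n))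
      have hlen : (g (n + 1)).1.length = n + 1 := (g (n + 1)).2.2
      have hn : n < (g (n + 1)).1.length := by omega
      have htake : (g (n + 1)).1.take (n + 1) = (g (n + 1)).1 :=
        List.take_of_length_le (by omega)
      rw [List.take_succ] at htake
      have hσn : [σ n] = (↑(g (n + 1)) : List B)[n]?.toList := by
        simp [hσ, List.getD_eq_getElem?_getD, List.getElem?_eq_getElem hn]
      rw [wordPrefix_succ, ih, ← hp, hσn]
      exact htake
  exact ⟨σ, fun n => (key n) ▸ (g n).2.1⟩

/-- Core lemma: the existential preimage of a safety property is "limit-closed". -/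
lemma core_lemma {A B : Type*} {f : (ℕ → A) → Set (ℕ → B)}
    (hcont : PrefixContinuous f) (hclosed : PrefixClosed f) (hcomp : PrefixCompact f)
    {L : Set (ℕ → B)} {Φ : Set (List B)}
    (hLΦ : L = {σ | ∀ k : ℕ, wordPrefix σ k ∈ Φ}) {π : ℕ → A}
    (h : ∀ n, ∃ π', π' ∈ existPreimage f L ∧ wordPrefix π' n = wordPrefix π n) :
    π ∈ existPreimage f L := by
  classical
  set T : Set (List B) := {w | w ∈ prefN (f π) w.length ∧ ∀ k, w.take k ∈ Φ} with hT
  have hfin : ∀ n, {w | w ∈ T ∧ w.length = n}.Finite := by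
    intro n
    apply (hcomp n π).subset
    rintro w ⟨⟨hw, -⟩, hl⟩
    rwa [hl] at hw
  have hpref : ∀ w ∈ T, ∀ k, w.take k ∈ T := by
    rintro w ⟨⟨σ', hσ', hw⟩, hΦ⟩ k
    constructor
    · refine ⟨σ', hσ', ?_⟩
      rw [← hw, List.length_take, wordPrefix_length, wordPrefix_take]
    · intro j
      rw [List.take_take]
      exact hΦ _
  have hinf : ∀ n, ∃ w ∈ T, w.length = n := by
    intro n
    obtain ⟨m, hm⟩ := hcont n π
    obtain ⟨π', hπ', hagree⟩ := h (max m n)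
    obtain ⟨σ', hσf, hσL⟩ := hπ'
    have heq := hm π' (wordPrefix_agree_of_le hagree (le_max_left m n))
    refine ⟨wordPrefix σ' n, ⟨?_, ?_⟩, wordPrefix_length σ' n⟩
    · rw [wordPrefix_length, heq]
      exact ⟨σ', hσf, rfl⟩
    · intro k
      rw [wordPrefix_take]
      have := hLΦ ▸ hσL
      exact this (min k n)
  obtain ⟨σ, hσT⟩ := exists_branch hfin hpref hinf
  refine ⟨σ, ?_, ?_⟩
  · apply hclosed
    rintro w ⟨n, rfl⟩
    have := (hσT n).1
    rw [wordPrefix_length] at this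
    exact Set.mem_iUnion.2 ⟨n, this⟩
  · rw [hLΦ]
    intro k
    have := (hσT k).2 k
    rwa [wordPrefix_take, min_self] at this

/-- The existential preimage under a prefix-continuous, prefix-closed, prefix-compact
function preserves safety, guarantee, and persistence properties. -/
theorem existPreimage_preserves_classes {A B : Type*} (f : (ℕ → A) → Set (ℕ → B))
    (hcont : PrefixContinuous f) (hclosed : PrefixClosed f) (hcomp : PrefixCompact f)
    (L : Set (ℕ → B)) :
    (IsSafetyProperty L → IsSafetyProperty (existPreimage f L)) ∧
    (IsGuaranteeProperty L → IsGuaranteeProperty (existPreimage f L)) ∧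
    (IsPersistenceProperty L → IsPersistenceProperty (existPreimage f L)) := by
  classical
  refine ⟨?_, ?_, ?_⟩
  · -- Safety
    rintro ⟨Φ, rfl⟩
    refine ⟨prefAll (existPreimage f {π | ∀ n : ℕ, wordPrefix π n ∈ Φ}), ?_⟩
    ext π
    constructor
    · intro hπ n
      exact Set.mem_iUnion.2 ⟨n, ⟨π, hπ, rfl⟩⟩
    · intro hπ
      refine core_lemma hcont hclosed hcomp rfl (fun n => ?_)
      obtain ⟨k, π', hπ', heq⟩ := Set.mem_iUnion.1 (hπ n)
      have hk : k = n := by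
        have := congrArg List.length heq
        simpa [wordPrefix_length] using this
      subst hk
      exact ⟨π', hπ', heq⟩
  · -- Guarantee
    rintro ⟨Φ, rfl⟩
    set L : Set (ℕ → B) := {π | ∃ n : ℕ, wordPrefix π n ∈ Φ} with hL
    refine ⟨{u : List A | ∀ π', wordPrefix π' u.length = u → π' ∈ existPreimage f L}, ?_⟩
    ext π
    constructor
    · intro hπ
      obtain ⟨σ0, hσf, hσL⟩ := mem_existPreimage.1 hπ
      obtain ⟨n, hσΦ⟩ := hσL
      obtain ⟨m, hm⟩ := hcont n π
      refine ⟨m, fun π' hπ' => ?_⟩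
      rw [wordPrefix_length] at hπ'
      have heq := hm π' hπ'
      have hmem : wordPrefix σ0 n ∈ prefN (f π') n := heq ▸ ⟨σ0, hσf, rfl⟩
      obtain ⟨σ', hσ'f, hpe⟩ := hmem
      have hpe' : wordPrefix σ' n = wordPrefix σ0 n := hpe
      exact ⟨σ', hσ'f, n, by rw [hpe']; exact hσΦ⟩
    · rintro ⟨n, hn⟩
      exact hn π (by rw [wordPrefix_length])
  · -- Persistence
    rintro ⟨Φ, rfl⟩
    set Lfin : Set (ℕ → B) := {σ | {n : ℕ | wordPrefix σ n ∈ Φ}.Finite} with hLfin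
    set Ψ : ℕ → Set (List B) := fun N => {w | N ≤ w.length → w ∉ Φ} with hΨ
    set L' : ℕ → Set (ℕ → B) := fun N => {σ | ∀ k : ℕ, wordPrefix σ k ∈ Ψ N} with hL'
    have hL'mono : ∀ {N M}, N ≤ M → L' N ⊆ L' M := by
      intro N M hNM σ hσ k hk
      exact hσ k (by rw [wordPrefix_length] at hk ⊢; omega)
    have hL'sub : ∀ N, L' N ⊆ Lfin := by
      intro N σ hσ
      apply (Set.finite_Iio N).subset
      intro k hk
      by_contra hlt
      simp only [Set.mem_Iio, not_lt] at hlt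
      exact hσ k (by rw [wordPrefix_length]; exact hlt) hk
    have hLunion : ∀ σ, σ ∈ Lfin ↔ ∃ N, σ ∈ L' N := by
      intro σ
      constructor
      · intro hσ
        obtain ⟨N, hN⟩ := hσ.bddAbove
        refine ⟨N + 1, fun k hk hmem => ?_⟩
        rw [wordPrefix_length] at hk
        have := hN hmem
        omega
      · rintro ⟨N, hN⟩
        exact hL'sub N hN
    set S : ℕ → Set (ℕ → A) := fun N => existPreimage f (L' N) with hS
    have hSmono : ∀ {N M}, N ≤ M → S N ⊆ S M := by
      rintro N M hNM π ⟨σ, hσf, hσL⟩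
      exact ⟨σ, hσf, hL'mono hNM hσL⟩
    have hSsub : ∀ N, S N ⊆ existPreimage f Lfin := by
      rintro N π ⟨σ, hσf, hσL⟩
      exact ⟨σ, hσf, hL'sub N hσL⟩
    set P : ℕ → Set (List A) := fun N => {w | ∃ π', π' ∈ S N ∧ wordPrefix π' w.length = w}
      with hP
    have hPmono : ∀ {N M}, N ≤ M → P N ⊆ P M := by
      rintro N M hNM w ⟨π', hπ', heq⟩
      exact ⟨π', hSmono hNM hπ', heq⟩
    have hPpref : ∀ {N w}, w ∈ P N → ∀ k, w.take k ∈ P N := by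
      rintro N w ⟨π', hπ', heq⟩ k
      refine ⟨π', hπ', ?_⟩
      rw [← heq, List.length_take, wordPrefix_length, wordPrefix_take]
    set h : List A → ℕ := fun w => sInf {N | w ∈ P N} with hh
    have h_mem : ∀ (w : List A) (N : ℕ), w ∈ P N → w ∈ P (h w) := by
      intro w N hw
      have : w ∈ P (sInf {N | w ∈ P N}) := Nat.sInf_mem (s := {N | w ∈ P N}) ⟨N, hw⟩
      simpa [hh] using this
    have h_le : ∀ (w : List A) (N : ℕ), w ∈ P N → h w ≤ N := by
      intro w N hw
      simpa [hh] using Nat.sInf_le hw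
    refine ⟨{w : List A | (∀ N, w ∉ P N) ∨ ¬(h (w.take (w.length - 1)) = h w)}, ?_⟩
    ext π
    constructor
    · -- π ∈ existPreimage f Lfin → finitely many prefixes in Φ'
      rintro ⟨σ, hσf, hσL⟩
      obtain ⟨N0, hN0⟩ := (hLunion σ).1 hσL
      have hπS : π ∈ S N0 := ⟨σ, hσf, hN0⟩
      have hD : ∀ n, wordPrefix π n ∈ P N0 := fun n =>
        ⟨π, hπS, by rw [wordPrefix_length]⟩
      set a : ℕ → ℕ := fun n => h (wordPrefix π n) with ha
      have ha_le : ∀ n, a n ≤ N0 := fun n => h_le _ _ (hD n)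
      have ha_mono : Monotone a := by
        apply monotone_nat_of_le_succ
        intro n
        apply h_le _ (a (n + 1))
        have hmem : wordPrefix π (n + 1) ∈ P (a (n + 1)) := h_mem _ _ (hD (n + 1))
        have := hPpref hmem n
        rwa [wordPrefix_take, min_eq_left (Nat.le_succ n)] at this
      obtain ⟨n0, hn0⟩ : ∃ n0, ∀ n, a n ≤ a n0 := by
        have hmem : sSup (Set.range a) ∈ Set.range a :=
          Nat.sSup_mem (Set.range_nonempty a) ⟨N0, by rintro x ⟨n, rfl⟩; exact ha_le n⟩
        obtain ⟨n0, hn0⟩ := hmem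
        exact ⟨n0, fun n => hn0 ▸ le_csSup ⟨N0, by rintro x ⟨m, rfl⟩; exact ha_le m⟩ ⟨n, rfl⟩⟩
      apply (Set.finite_Iio (n0 + 1)).subset
      intro n hn
      simp only [Set.mem_Iio]
      by_contra hge
      push_neg at hge
      rcases hn with hn | hn
      · exact hn N0 (hD n)
      · apply hn
        have hlen : (wordPrefix π n).length = n := wordPrefix_length π n
        rw [hlen, wordPrefix_take, min_eq_left (Nat.sub_le n 1)]
        have h1 : a (n - 1) ≤ a n := ha_mono (Nat.sub_le n 1)
        have h2 : a n ≤ a n0 := hn0 n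
        have h3 : a n0 ≤ a (n - 1) := ha_mono (by omega)
        show a (n - 1) = a n
        omega
    · -- finitely many prefixes in Φ' → π ∈ existPreimage f Lfin
      intro hfinΦ
      obtain ⟨N1, hN1⟩ := hfinΦ.bddAbove
      have hnot : ∀ n, N1 + 1 ≤ n →
          (∃ N, wordPrefix π n ∈ P N) ∧
            h ((wordPrefix π n).take ((wordPrefix π n).length - 1)) = h (wordPrefix π n) := by
        intro n hn
        have hmem' : ¬((∀ N, wordPrefix π n ∉ P N) ∨
            ¬(h ((wordPrefix π n).take ((wordPrefix π n).length - 1)) = h (wordPrefix π n))) := by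
          intro hmem
          have hle : n ≤ N1 := hN1 hmem
          omega
        push_neg at hmem'
        exact hmem'
      have htake : ∀ n, (wordPrefix π (n + 1)).take n = wordPrefix π n := by
        intro n
        rw [wordPrefix_take, min_eq_left (Nat.le_succ n)]
      have hconst : ∀ n, N1 + 1 ≤ n → h (wordPrefix π n) = h (wordPrefix π (N1 + 1)) := by
        intro n hn
        induction n with
        | zero => omega
        | succ m ih =>
          rcases Nat.lt_or_ge m (N1 + 1) with hm | hm
          · have : m + 1 = N1 + 1 := by omega
            rw [this]
          · have hstep := (hnot (m + 1) (by omega)).2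
            rw [wordPrefix_length, Nat.add_sub_cancel, htake m] at hstep
            rw [← hstep]
            exact ih hm
      set Nstar : ℕ := h (wordPrefix π (N1 + 1)) with hNstar
      have hPall : ∀ n, wordPrefix π n ∈ P Nstar := by
        intro n
        rcases Nat.lt_or_ge n (N1 + 1) with hn | hn
        · have hmem : wordPrefix π (N1 + 1) ∈ P Nstar := by
            obtain ⟨N, hN⟩ := (hnot (N1 + 1) le_rfl).1
            exact h_mem _ _ hN
          have := hPpref hmem n
          rwa [wordPrefix_take, min_eq_left (by omega)] at this
        · obtain ⟨N, hN⟩ := (hnot n hn).1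
          have hmem : wordPrefix π n ∈ P (h (wordPrefix π n)) := h_mem _ _ hN
          rwa [hconst n hn] at hmem
      have hπS : π ∈ S Nstar := by
        refine core_lemma hcont hclosed hcomp (L := L' Nstar) (Φ := Ψ Nstar) rfl (fun n => ?_)
        obtain ⟨π', hπ', heq⟩ := hPall n
        rw [wordPrefix_length] at heq
        exact ⟨π', hπ', heq⟩
      exact hSsub Nstar hπS
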